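/- Let M ⊂ ℝ^d be a bounded polytope partitioned mod 0 into finitely many open convex polytope atoms {A_ω}_{ω∈𝒜}, each given as A_ω = P^α_{m_ω} with m_ω = O(m_ω), for a non-degenerate coefficient matrix α ∈ ℝ^{e×d}. Let F : M → M satisfy F = a·Id + B with a > 1 and B constant equal to B_ω on each atom A_ω. Let q ∈ ℕ, for each k ∈ {1,…,q} a set 𝒜_k ⊆ 𝒜, and for each k and ω ∈ 𝒜_k an index ℓ(k,ω) ∈ {1,…,q}. Then the polytopes {P^α_{m_k}}_{k=1}^q satisfy the conditioning problem (namely: P^α_{m_k} ∩ A_ω ≠ ∅ iff ω ∈ 𝒜_k, and F(P^α_{m_k} ∩ A_ω) ⊆ P^α_{m_{ℓ(k,ω)}} for every nonempty intersection) if and only if: P^α_{O(m_k ∩ m_ω)} ≠ ∅ iff ω ∈ 𝒜_k, and for each nonempty P^α_{O(m_k ∩ m_ω)} the constraint matrix a·O(m_k ∩ m_ω) + αB_ω is contained in m_{ℓ(k,ω)} in the sense of constraint-matrix inclusion. -/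

import Mathlib

open Set

/-- A constraint matrix: a pair of vectors of lower and upper bounds in `ℝ^e`. -/
abbrev CM (e : ℕ) := (Fin e → ℝ) × (Fin e → ℝ)

/-- The open polytope `P^α_m` associated with a coefficient matrix `α` and a
constraint matrix `m`. -/
def PolySet {e d : ℕ} (α : Matrix (Fin e) (Fin d) ℝ) (m : CM e) : Set (Fin d → ℝ) :=
  {x | ∀ i, m.1 i < α.mulVec x i ∧ α.mulVec x i < m.2 i}

/-- A coefficient matrix is non-degenerate if its rows are nonzero and
pairwise non-proportional. -/
def Nondeg {e d : ℕ} (α : Matrix (Fin e) (Fin d) ℝ) : Prop :=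
  (∀ i, α i ≠ 0) ∧ ∀ i j : Fin e, i ≠ j → ∀ c : ℝ, α i ≠ c • α j

/-- The set `Λ_i`: vectors `λ ∈ ℝ^e` supported on some `S` with `|S| ≤ d` which are
the unique solution of `λᵀ α = α_i` with support in `S`. -/
def Lambda {e d : ℕ} (α : Matrix (Fin e) (Fin d) ℝ) (i : Fin e) : Set (Fin e → ℝ) :=
  {l | ∃ S : Finset (Fin e), S.card ≤ d ∧ (∀ k ∉ S, l k = 0) ∧
        (∀ j, ∑ k, l k * α k j = α i j) ∧
        ∀ l' : Fin e → ℝ, (∀ k ∉ S, l' k = 0) → (∀ j, ∑ k, l' k * α k j = α i j) → l' = l}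

/-- `e̲_k(a,m)` -/
noncomputable def eLow {e : ℕ} (a : ℝ) (m : CM e) (k : Fin e) : ℝ :=
  if 0 ≤ a then m.1 k else m.2 k

/-- `ē_k(a,m)` -/
noncomputable def eHigh {e : ℕ} (a : ℝ) (m : CM e) (k : Fin e) : ℝ :=
  if 0 ≤ a then m.2 k else m.1 k

/-- The optimized constraint matrix `O(m)`. -/
noncomputable def Opt {e d : ℕ} (α : Matrix (Fin e) (Fin d) ℝ) (m : CM e) : CM e :=
  (fun i => sSup ((fun l : Fin e → ℝ => ∑ k, l k * eLow (l k) m k) '' Lambda α i),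
   fun i => sInf ((fun l : Fin e → ℝ => ∑ k, l k * eHigh (l k) m k) '' Lambda α i))

/-- Intersection constraint matrix `m ∩ m'`. -/
def interCM {e : ℕ} (m m' : CM e) : CM e :=
  (fun i => max (m.1 i) (m'.1 i), fun i => min (m.2 i) (m'.2 i))

/-- Constraint-matrix inclusion `m ⊂ m'`. -/
def cmSub {e : ℕ} (m m' : CM e) : Prop := ∀ i, m'.1 i ≤ m.1 i ∧ m.2 i ≤ m'.2 i

/-!
Each bound `O(m)_i` is the best value of the dual of the linear program `min / max (α x)_i` over
`P^α_m`, taken over the basic dual solutions `λ ∈ Λ_i`. Weak duality makes these bounds valid on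
`P^α_m`, and since `e_i ∈ Λ_i` they are no weaker than `m`, so `P^α_{O(m)} = P^α_m`. Strong
duality makes them sharp when `P^α_m` is nonempty and bounded: at an optimal point of the compact
closure, Farkas' lemma writes `α_i` as a signed combination of active rows, and conic
Carathéodory shrinks it to linearly independent rows, i.e. to an element of `Λ_i`. Hence an
affine map `x ↦ a x + B` with `a > 0` sends `P^α_m` into `P^α_{m'}` iff `a O(m) + αB ⊂ m'`;
on the polytope of `m_k ∩ m_ω` the map `F` is of this form.
-/

section ConicCombination

variable {ι E : Type*} [AddCommGroup E] [Module ℝ E]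

theorem LinearIndepOn.of_smul {v : ι → E} {s : ι → ℝ} {S : Set ι}
    (h : LinearIndepOn ℝ (fun k => s k • v k) S) : LinearIndepOn ℝ v S := by
  have hs : ∀ k : S, s k ≠ 0 := fun k hk => h.ne_zero k.2 (by simp [hk])
  show LinearIndependent ℝ fun k : S => v k
  convert h.units_smul fun k => Units.mk0 (s k)⁻¹ (inv_ne_zero (hs k)) using 1
  funext k
  simp [hs k]

variable [Fintype ι]

theorem finset_sum_smul_eq_sum_univ {w : ι → E} {S : Finset ι} {g : ι → ℝ}
    (hg : ∀ k ∉ S, g k = 0) : ∑ k ∈ S, g k • w k = ∑ k, g k • w k :=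
  Finset.sum_subset (Finset.subset_univ S) fun k _ hk => by rw [hg k hk, zero_smul]

theorem linearIndepOn_finset_iff_sum_univ {w : ι → E} {S : Finset ι} :
    LinearIndepOn ℝ w S ↔
      ∀ g : ι → ℝ, (∀ k ∉ S, g k = 0) → ∑ k, g k • w k = 0 → ∀ k, g k = 0 := by
  rw [linearIndepOn_iff'']
  refine ⟨fun h g hgS hg k => ?_, fun h t g hts hgt hg k _ => h g ?_ ?_ k⟩
  · by_cases hk : k ∈ S
    · exact h S g subset_rfl hgS (by rwa [finset_sum_smul_eq_sum_univ hgS]) k hk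
    · exact hgS k hk
  · exact fun k hk => hgt k fun hkt => hk (hts hkt)
  · rwa [← finset_sum_smul_eq_sum_univ hgt]

theorem LinearIndepOn.eq_of_sum_smul_eq {w : ι → E} {S : Finset ι} (hS : LinearIndepOn ℝ w S)
    {c c' : ι → ℝ} (hc : ∀ k ∉ S, c k = 0) (hc' : ∀ k ∉ S, c' k = 0)
    (h : ∑ k, c k • w k = ∑ k, c' k • w k) : c = c' := by
  have := linearIndepOn_finset_iff_sum_univ.1 hS (c - c') (fun k hk => by simp [hc k hk, hc' k hk])
    (by simp [sub_smul, Finset.sum_sub_distrib, h])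
  funext k
  simpa [sub_eq_zero] using this k

/-- One step of Carathéodory's reduction: move along the dependency `μ` until a first
coefficient vanishes. -/
theorem exists_nonneg_sum_smul_eq_support_ssubset {w : ι → E} {c μ : ι → ℝ} (hc : 0 ≤ c)
    (hμw : ∑ k, μ k • w k = 0) (hμc : ∀ k, c k = 0 → μ k = 0) (hμpos : ∃ k, 0 < μ k) :
    ∃ c' : ι → ℝ, 0 ≤ c' ∧ ∑ k, c' k • w k = ∑ k, c k • w k ∧
      Finset.univ.filter (c' · ≠ 0) ⊂ Finset.univ.filter (c · ≠ 0) := by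
  classical
  obtain ⟨k₀, hk₀, hmin⟩ := Finset.exists_min_image (Finset.univ.filter (0 < μ ·))
    (fun k => c k / μ k) (by simpa [Finset.Nonempty] using hμpos)
  simp only [Finset.mem_filter, Finset.mem_univ, true_and] at hk₀ hmin
  set t := c k₀ / μ k₀ with ht_def
  have ht : 0 ≤ t := div_nonneg (hc k₀) hk₀.le
  refine ⟨c - t • μ, fun k => ?_, ?_, ?_⟩
  · have hck : 0 ≤ c k := hc k
    simp only [Pi.zero_apply, Pi.sub_apply, Pi.smul_apply, smul_eq_mul, sub_nonneg]
    rcases lt_or_ge 0 (μ k) with hk | hk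
    · exact (le_div_iff₀ hk).1 (hmin k hk)
    · nlinarith
  · simp [sub_smul, Finset.sum_sub_distrib, mul_smul, ← Finset.smul_sum, hμw]
  · refine Finset.ssubset_iff_of_subset (fun k => ?_) |>.2 ⟨k₀, ?_, ?_⟩
    · simp only [Finset.mem_filter, Finset.mem_univ, true_and, Pi.sub_apply, Pi.smul_apply]
      intro h hck
      simp [hck, hμc k hck] at h
    · simpa using fun h => (hμc k₀ h ▸ hk₀).false
    · simp [ht_def, hk₀.ne']

theorem exists_nonneg_linearIndepOn_sum_smul_eq (w : ι → E) {c : ι → ℝ} (hc : 0 ≤ c) :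
    ∃ (S : Finset ι) (c' : ι → ℝ), LinearIndepOn ℝ w S ∧ 0 ≤ c' ∧ (∀ k ∉ S, c' k = 0) ∧
      ∑ k, c' k • w k = ∑ k, c k • w k := by
  classical
  induction hn : (Finset.univ.filter (c · ≠ 0)).card using Nat.strong_induction_on
    generalizing c with
  | _ n ih =>
    set S := Finset.univ.filter (c · ≠ 0)
    have hcS : ∀ k ∉ S, c k = 0 := by simp [S]
    by_cases hS : LinearIndepOn ℝ w S
    · exact ⟨S, c, hS, hc, hcS, rfl⟩
    obtain ⟨μ, hμS, hμw, k, hk⟩ : ∃ μ : ι → ℝ, (∀ k ∉ S, μ k = 0) ∧ ∑ k, μ k • w k = 0 ∧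
        ∃ k, μ k ≠ 0 := by
      simpa [linearIndepOn_finset_iff_sum_univ] using hS
    have hμc : ∀ k, c k = 0 → μ k = 0 := fun k h => hμS k (by simp [S, h])
    obtain ⟨c', hc', hsum, hlt⟩ : ∃ c' : ι → ℝ, 0 ≤ c' ∧ ∑ k, c' k • w k = ∑ k, c k • w k ∧
        Finset.univ.filter (c' · ≠ 0) ⊂ S := by
      rcases hk.lt_or_gt with hneg | hpos
      · exact exists_nonneg_sum_smul_eq_support_ssubset (μ := -μ) hc (by simp [neg_smul, hμw])
          (by simpa using hμc) ⟨k, by simpa using hneg⟩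
      · exact exists_nonneg_sum_smul_eq_support_ssubset hc hμw hμc ⟨k, hpos⟩
    obtain ⟨T, c'', hT, hc'', hc''T, hsum'⟩ := ih _ (hn ▸ Finset.card_lt_card hlt) hc' rfl
    exact ⟨T, c'', hT, hc'', hc''T, hsum'.trans hsum⟩

theorem mem_positive_map_linearCombination (w : ι → E) (k : ι) :
    w k ∈ (PointedCone.positive ℝ (ι → ℝ)).map (Fintype.linearCombination ℝ w) := by
  classical
  exact PointedCone.mem_map.2 ⟨Pi.single k 1, Pi.single_nonneg.2 zero_le_one, by simp⟩

variable [TopologicalSpace E] [IsTopologicalAddGroup E] [ContinuousSMul ℝ E] [T2Space E]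

theorem isClosed_positive_map_linearCombination (w : ι → E) :
    IsClosed ((PointedCone.positive ℝ (ι → ℝ)).map (Fintype.linearCombination ℝ w) : Set E) := by
  classical
  set C := (PointedCone.positive ℝ (ι → ℝ)).map (Fintype.linearCombination ℝ w)
  -- By Carathéodory, `C` is the finite union of the simplicial cones spanned by linearly
  -- independent subfamilies, each the image of an orthant under a closed embedding.
  have hC : (C : Set E) = ⋃ (S : Finset ι) (_ : LinearIndepOn ℝ w S),
      ((PointedCone.positive ℝ (S → ℝ)).map (Fintype.linearCombination ℝ (fun k : S => w k)) :
        Set E) := by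
    refine subset_antisymm (fun x hx => ?_) (iUnion₂_subset fun S _ => ?_)
    · obtain ⟨c, hc, rfl⟩ := PointedCone.mem_map.1 hx
      obtain ⟨S, c', hS, hc', hc'S, hsum⟩ :=
        exists_nonneg_linearIndepOn_sum_smul_eq w hc
      refine mem_iUnion₂.2 ⟨S, hS, PointedCone.mem_map.2 ⟨fun k => c' k, fun k => hc' k, ?_⟩⟩
      rw [Fintype.linearCombination_apply, Fintype.linearCombination_apply, ← hsum,
        Finset.sum_coe_sort S fun k => c' k • w k, finset_sum_smul_eq_sum_univ hc'S]
    · rintro _ ⟨c, hc, rfl⟩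
      simp only [LinearMap.coe_restrictScalars, Fintype.linearCombination_apply, SetLike.mem_coe]
      exact C.sum_mem fun k _ => C.smul_mem (hc k) (mem_positive_map_linearCombination w k)
  rw [hC]
  refine isClosed_iUnion_of_finite fun S => isClosed_iUnion_of_finite fun hS => ?_
  rw [PointedCone.coe_map]
  refine (LinearMap.isClosedEmbedding_of_injective ?_).isClosedMap _ ?_
  · exact LinearMap.ker_eq_bot.2 (linearIndependent_iff_injective_fintypeLinearCombination.1 hS)
  · exact isClosed_le continuous_const continuous_id

theorem exists_strongDual_nonneg_of_not_exists_nonneg_sum_smul_eq [LocallyConvexSpace ℝ E]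
    (w : ι → E) {x : E} (hx : ¬∃ c : ι → ℝ, 0 ≤ c ∧ ∑ k, c k • w k = x) :
    ∃ f : StrongDual ℝ E, (∀ k, 0 ≤ f (w k)) ∧ f x < 0 := by
  let C : ProperCone ℝ E :=
    ⟨(PointedCone.positive ℝ (ι → ℝ)).map (Fintype.linearCombination ℝ w),
      isClosed_positive_map_linearCombination w⟩
  have hxC : x ∉ C := fun h => hx <| by
    obtain ⟨c, hc, hcx⟩ := PointedCone.mem_map.1 h
    exact ⟨c, hc, by rwa [Fintype.linearCombination_apply] at hcx⟩
  obtain ⟨f, hfC, hfx⟩ := C.hyperplane_separation_point hxC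
  exact ⟨f, fun k => hfC _ (mem_positive_map_linearCombination w k), hfx⟩

end ConicCombination

open Matrix Filter Topology

section Lambda

variable {e d : ℕ} {α : Matrix (Fin e) (Fin d) ℝ} {i : Fin e} {l : Fin e → ℝ}

theorem forall_sum_mul_eq_iff_vecMul_eq :
    (∀ j, ∑ k, l k * α k j = α i j) ↔ l ᵥ* α = α i := by
  simp [funext_iff, vecMul, dotProduct]

theorem mulVec_apply_eq_dotProduct (hl : l ᵥ* α = α i) (x : Fin d → ℝ) :
    (α *ᵥ x) i = l ⬝ᵥ (α *ᵥ x) := by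
  rw [dotProduct_mulVec, hl]
  rfl

theorem mem_Lambda_of_linearIndepOn {S : Finset (Fin e)} (hS : LinearIndepOn ℝ α.row S)
    (hlS : ∀ k ∉ S, l k = 0) (hl : l ᵥ* α = α i) : l ∈ Lambda α i := by
  refine ⟨S, ?_, hlS, forall_sum_mul_eq_iff_vecMul_eq.2 hl, fun l' hl'S hl' => ?_⟩
  · simpa using hS.fintype_card_le_finrank
  · refine hS.eq_of_sum_smul_eq hl'S hlS ?_
    change ∑ k, l' k • α k = ∑ k, l k • α k
    rw [← vecMul_eq_sum, ← vecMul_eq_sum, forall_sum_mul_eq_iff_vecMul_eq.1 hl', hl]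

theorem finite_Lambda (α : Matrix (Fin e) (Fin d) ℝ) (i : Fin e) : (Lambda α i).Finite := by
  refine Set.Finite.of_finite_image (f := fun l => {k | l k ≠ 0}) (Set.toFinite _) ?_
  rintro l ⟨S, -, hlS, -, huniq⟩ l' ⟨-, -, -, hl', -⟩ hsupp
  refine (huniq l' (fun k hk => ?_) hl').symm
  by_contra h
  have hk' : k ∈ {k | l' k ≠ 0} := h
  rw [← show {k | l k ≠ 0} = {k | l' k ≠ 0} from hsupp] at hk'
  exact hk' (hlS k hk)

theorem single_mem_Lambda (hαi : α i ≠ 0) : Pi.single i 1 ∈ Lambda α i :=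
  mem_Lambda_of_linearIndepOn (S := {i}) (by rwa [Finset.coe_singleton, linearIndepOn_singleton_iff])
    (fun k hk => Pi.single_eq_of_ne (by simpa using hk) 1) (by rw [single_one_vecMul]; rfl)

theorem ne_zero_of_mem_Lambda (hαi : α i ≠ 0) (hl : l ∈ Lambda α i) : l ≠ 0 := by
  rintro rfl
  obtain ⟨-, -, -, h, -⟩ := hl
  exact hαi (funext fun j => by simpa using (h j).symm)

end Lambda

section Opt

variable {e d : ℕ} {α : Matrix (Fin e) (Fin d) ℝ} {n : CM e} {i : Fin e} {l : Fin e → ℝ}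

theorem mul_eLow_lt {c y : ℝ} {k : Fin e} (hc : c ≠ 0) (hlo : n.1 k < y) (hhi : y < n.2 k) :
    c * eLow c n k < c * y := by
  unfold eLow
  split_ifs with h
  · exact mul_lt_mul_of_pos_left hlo (lt_of_le_of_ne h (Ne.symm hc))
  · exact mul_lt_mul_of_neg_left hhi (not_le.1 h)

theorem mul_lt_mul_eHigh {c y : ℝ} {k : Fin e} (hc : c ≠ 0) (hlo : n.1 k < y) (hhi : y < n.2 k) :
    c * y < c * eHigh c n k := by
  unfold eHigh
  split_ifs with h
  · exact mul_lt_mul_of_pos_left hhi (lt_of_le_of_ne h (Ne.symm hc))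
  · exact mul_lt_mul_of_neg_left hlo (not_le.1 h)

theorem sum_mul_eLow_lt_dotProduct (hl : l ≠ 0) {x : Fin d → ℝ} (hx : x ∈ PolySet α n) :
    ∑ k, l k * eLow (l k) n k < l ⬝ᵥ (α *ᵥ x) := by
  obtain ⟨k₀, hk₀⟩ := Function.ne_iff.1 hl
  refine Finset.sum_lt_sum (fun k _ => ?_) ⟨k₀, Finset.mem_univ _, mul_eLow_lt hk₀ (hx k₀).1 (hx k₀).2⟩
  rcases eq_or_ne (l k) 0 with hk | hk
  · simp [hk]
  · exact (mul_eLow_lt hk (hx k).1 (hx k).2).le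

theorem dotProduct_lt_sum_mul_eHigh (hl : l ≠ 0) {x : Fin d → ℝ} (hx : x ∈ PolySet α n) :
    l ⬝ᵥ (α *ᵥ x) < ∑ k, l k * eHigh (l k) n k := by
  obtain ⟨k₀, hk₀⟩ := Function.ne_iff.1 hl
  refine Finset.sum_lt_sum (fun k _ => ?_) ⟨k₀, Finset.mem_univ _,
    mul_lt_mul_eHigh hk₀ (hx k₀).1 (hx k₀).2⟩
  rcases eq_or_ne (l k) 0 with hk | hk
  · simp [hk]
  · exact (mul_lt_mul_eHigh hk (hx k).1 (hx k).2).le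

theorem sum_mul_eLow_eq_dotProduct {y : Fin e → ℝ} (hpos : ∀ k, 0 < l k → y k = n.1 k)
    (hneg : ∀ k, l k < 0 → y k = n.2 k) : ∑ k, l k * eLow (l k) n k = l ⬝ᵥ y := by
  refine Finset.sum_congr rfl fun k _ => ?_
  rcases lt_trichotomy (l k) 0 with hk | hk | hk
  · rw [eLow, if_neg (not_le.2 hk), hneg k hk]
  · simp [hk]
  · rw [eLow, if_pos hk.le, hpos k hk]

theorem sum_mul_eHigh_eq_dotProduct {y : Fin e → ℝ} (hpos : ∀ k, 0 < l k → y k = n.2 k)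
    (hneg : ∀ k, l k < 0 → y k = n.1 k) : ∑ k, l k * eHigh (l k) n k = l ⬝ᵥ y := by
  refine Finset.sum_congr rfl fun k _ => ?_
  rcases lt_trichotomy (l k) 0 with hk | hk | hk
  · rw [eHigh, if_neg (not_le.2 hk), hneg k hk]
  · simp [hk]
  · rw [eHigh, if_pos hk.le, hpos k hk]

theorem sum_single_mul_eLow (n : CM e) (i : Fin e) :
    ∑ k, (Pi.single i 1 : Fin e → ℝ) k * eLow ((Pi.single i 1 : Fin e → ℝ) k) n k = n.1 i := by
  rw [Fintype.sum_eq_single i fun k hk => by rw [Pi.single_eq_of_ne hk, zero_mul]]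
  simp [eLow]

theorem sum_single_mul_eHigh (n : CM e) (i : Fin e) :
    ∑ k, (Pi.single i 1 : Fin e → ℝ) k * eHigh ((Pi.single i 1 : Fin e → ℝ) k) n k = n.2 i := by
  rw [Fintype.sum_eq_single i fun k hk => by rw [Pi.single_eq_of_ne hk, zero_mul]]
  simp [eHigh]

theorem le_Opt_fst (hl : l ∈ Lambda α i) : ∑ k, l k * eLow (l k) n k ≤ (Opt α n).1 i :=
  le_csSup ((finite_Lambda α i).image _).bddAbove ⟨l, hl, rfl⟩

theorem Opt_snd_le (hl : l ∈ Lambda α i) : (Opt α n).2 i ≤ ∑ k, l k * eHigh (l k) n k :=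
  csInf_le ((finite_Lambda α i).image _).bddBelow ⟨l, hl, rfl⟩

theorem exists_mem_Lambda_eq_Opt_fst (hαi : α i ≠ 0) :
    ∃ l ∈ Lambda α i, ∑ k, l k * eLow (l k) n k = (Opt α n).1 i :=
  (Set.Nonempty.image _ ⟨_, single_mem_Lambda hαi⟩).csSup_mem
    ((finite_Lambda α i).image _)

theorem exists_mem_Lambda_eq_Opt_snd (hαi : α i ≠ 0) :
    ∃ l ∈ Lambda α i, ∑ k, l k * eHigh (l k) n k = (Opt α n).2 i :=
  (Set.Nonempty.image _ ⟨_, single_mem_Lambda hαi⟩).csInf_mem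
    ((finite_Lambda α i).image _)

theorem polySet_Opt (hα : ∀ i, α i ≠ 0) (n : CM e) : PolySet α (Opt α n) = PolySet α n := by
  ext x
  refine ⟨fun hx i => ⟨?_, ?_⟩, fun hx i => ⟨?_, ?_⟩⟩
  · refine lt_of_le_of_lt ?_ (hx i).1
    simpa [sum_single_mul_eLow] using le_Opt_fst (n := n) (single_mem_Lambda (hα i))
  · refine lt_of_lt_of_le (hx i).2 ?_
    simpa [sum_single_mul_eHigh] using Opt_snd_le (n := n) (single_mem_Lambda (hα i))
  · obtain ⟨l, hl, hval⟩ := exists_mem_Lambda_eq_Opt_fst (n := n) (hα i)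
    rw [← hval, mulVec_apply_eq_dotProduct (forall_sum_mul_eq_iff_vecMul_eq.1 hl.choose_spec.2.2.1)]
    exact sum_mul_eLow_lt_dotProduct (ne_zero_of_mem_Lambda (hα i) hl) hx
  · obtain ⟨l, hl, hval⟩ := exists_mem_Lambda_eq_Opt_snd (n := n) (hα i)
    rw [← hval, mulVec_apply_eq_dotProduct (forall_sum_mul_eq_iff_vecMul_eq.1 hl.choose_spec.2.2.1)]
    exact dotProduct_lt_sum_mul_eHigh (ne_zero_of_mem_Lambda (hα i) hl) hx

theorem polySet_interCM (m m' : CM e) :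
    PolySet α (interCM m m') = PolySet α m ∩ PolySet α m' := by
  ext x
  simp only [PolySet, interCM, mem_ofPred_eq, mem_inter_iff, max_lt_iff, lt_min_iff]
  exact ⟨fun h => ⟨fun i => ⟨(h i).1.1, (h i).2.1⟩, fun i => ⟨(h i).1.2, (h i).2.2⟩⟩,
    fun h i => ⟨⟨(h.1 i).1, (h.2 i).1⟩, (h.1 i).2, (h.2 i).2⟩⟩

end Opt

theorem strongDual_apply_eq_dotProduct {d : ℕ} (f : StrongDual ℝ (Fin d → ℝ)) (z : Fin d → ℝ) :
    f z = z ⬝ᵥ fun j => f (Pi.single j 1) := by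
  conv_lhs => rw [← Finset.univ_sum_single z]
  refine (map_sum f _ _).trans (Finset.sum_congr rfl fun j _ => ?_)
  rw [← smul_eq_mul, ← map_smul, ← Pi.single_smul, smul_eq_mul, mul_one]

theorem eventually_add_mul_le {a b c : ℝ} (hac : a ≤ c) (hb : a = c → b ≤ 0) :
    ∀ᶠ t in 𝓝[>] (0 : ℝ), a + t * b ≤ c := by
  rcases hac.lt_or_eq with hac | rfl
  · have hlim : Tendsto (fun t : ℝ => a + t * b) (𝓝[>] 0) (𝓝 a) :=
      ((show Continuous fun t : ℝ => a + t * b by fun_prop).tendsto' 0 a (by simp)).mono_left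
        nhdsWithin_le_nhds
    exact (hlim.eventually (gt_mem_nhds hac)).mono fun _ => le_of_lt
  · filter_upwards [self_mem_nhdsWithin] with t (ht : 0 < t)
    nlinarith [hb rfl]

theorem eventually_add_mul_mem_Icc {a b lo hi : ℝ} (hlo : lo ≤ a) (hhi : a ≤ hi)
    (hblo : a = lo → 0 ≤ b) (hbhi : a = hi → b ≤ 0) :
    ∀ᶠ t in 𝓝[>] (0 : ℝ), a + t * b ∈ Icc lo hi := by
  filter_upwards [eventually_add_mul_le hhi hbhi,
    eventually_add_mul_le (neg_le_neg hlo) fun h => neg_nonpos.2 (hblo (neg_inj.1 h))]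
    with t hthi htlo
  exact ⟨by linarith, hthi⟩

section Duality

variable {e d : ℕ} {α : Matrix (Fin e) (Fin d) ℝ} {n : CM e}

theorem continuous_mulVec_apply (α : Matrix (Fin e) (Fin d) ℝ) (k : Fin e) :
    Continuous fun x : Fin d → ℝ => (α *ᵥ x) k :=
  (continuous_apply k).comp (Continuous.matrix_mulVec continuous_const continuous_id)

theorem closure_polySet (hP : (PolySet α n).Nonempty) :
    closure (PolySet α n) = {x | ∀ k, n.1 k ≤ (α *ᵥ x) k ∧ (α *ᵥ x) k ≤ n.2 k} := by
  obtain ⟨x₀, hx₀⟩ := hP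
  refine subset_antisymm (closure_minimal (fun x hx k => ⟨(hx k).1.le, (hx k).2.le⟩) ?_)
    fun y hy => ?_
  · simp only [ofPred_forall]
    exact isClosed_iInter fun k => (isClosed_le continuous_const (continuous_mulVec_apply α k)).inter
      (isClosed_le (continuous_mulVec_apply α k) continuous_const)
  · have hlim : Tendsto (fun s : ℝ => y + s • (x₀ - y)) (𝓝[>] 0) (𝓝 y) :=
      ((show Continuous fun s : ℝ => y + s • (x₀ - y) by fun_prop).tendsto' 0 y
        (by simp)).mono_left nhdsWithin_le_nhds
    refine mem_closure_of_tendsto hlim ?_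
    filter_upwards [Ioc_mem_nhdsGT zero_lt_one] with s ⟨hs₀, hs₁⟩ k
    have hval : (α *ᵥ (y + s • (x₀ - y))) k = (1 - s) * (α *ᵥ y) k + s * (α *ᵥ x₀) k := by
      simp only [mulVec_add, mulVec_smul, mulVec_sub, Pi.add_apply, Pi.smul_apply, Pi.sub_apply,
        smul_eq_mul]
      ring
    rw [hval]
    constructor <;> nlinarith [hy k, hx₀ k]

noncomputable def activeSign (α : Matrix (Fin e) (Fin d) ℝ) (n : CM e) (x : Fin d → ℝ)
    (k : Fin e) : ℝ :=
  if (α *ᵥ x) k = n.2 k then 1 else if (α *ᵥ x) k = n.1 k then -1 else 0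

theorem mulVec_eq_snd_of_activeSign_pos {x : Fin d → ℝ} {k : Fin e}
    (h : 0 < activeSign α n x k) : (α *ᵥ x) k = n.2 k := by
  unfold activeSign at h
  split_ifs at h with h₁ <;> first | exact h₁ | norm_num at h

theorem mulVec_eq_fst_of_activeSign_neg {x : Fin d → ℝ} {k : Fin e}
    (h : activeSign α n x k < 0) : (α *ᵥ x) k = n.1 k := by
  unfold activeSign at h
  split_ifs at h with h₁ h₂ <;> first | exact h₂ | norm_num at h

/-- First-order optimality at a maximizer over the closed polytope: the objective is a
nonnegative combination of the outward normals of the active constraints. -/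
theorem exists_nonneg_sum_smul_activeSign_eq (hP : (PolySet α n).Nonempty) {u xs : Fin d → ℝ}
    (hxs : xs ∈ closure (PolySet α n)) (hmax : IsMaxOn (u ⬝ᵥ ·) (closure (PolySet α n)) xs) :
    ∃ c : Fin e → ℝ, 0 ≤ c ∧ ∑ k, c k • (activeSign α n xs k • α k) = u := by
  have hlt : ∀ k, n.1 k < n.2 k := fun k => (hP.some_mem k).1.trans (hP.some_mem k).2
  -- Otherwise Farkas gives `f` with `f u < 0`, and `-y` (`y` represents `f`) is a feasible
  -- direction at `xs` along which the objective increases.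
  by_contra hcone
  obtain ⟨f, hf, hfu⟩ := exists_strongDual_nonneg_of_not_exists_nonneg_sum_smul_eq _ hcone
  set y : Fin d → ℝ := fun j => f (Pi.single j 1)
  rw [closure_polySet hP] at hxs hmax
  have hmove : ∀ᶠ t in 𝓝[>] (0 : ℝ), ∀ k,
      (α *ᵥ xs) k + t * -f (α k) ∈ Icc (n.1 k) (n.2 k) := by
    refine eventually_all.2 fun k => eventually_add_mul_mem_Icc (hxs k).1 (hxs k).2
      (fun hk => ?_) fun hk => ?_
    · have := hf k
      rw [activeSign, if_neg (hk ▸ (hlt k).ne), if_pos hk, map_smul] at this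
      simpa using this
    · have := hf k
      rw [activeSign, if_pos hk, one_smul] at this
      simpa using this
  obtain ⟨t, ht, ht₀⟩ := (hmove.and self_mem_nhdsWithin).exists
  have hmem : xs - t • y ∈ {x | ∀ k, n.1 k ≤ (α *ᵥ x) k ∧ (α *ᵥ x) k ≤ n.2 k} := fun k => by
    simpa [mulVec_sub, mulVec_smul, mulVec, strongDual_apply_eq_dotProduct f (α k), y,
      sub_eq_add_neg] using ht k
  have := hmax hmem
  simp only [mem_ofPred_eq, dotProduct_sub, dotProduct_smul, smul_eq_mul] at this
  rw [← strongDual_apply_eq_dotProduct] at this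
  nlinarith [show (0 : ℝ) < t from ht₀]

theorem exists_basic_dual_certificate (hP : (PolySet α n).Nonempty)
    (hb : Bornology.IsBounded (PolySet α n)) (u : Fin d → ℝ) :
    ∃ x ∈ closure (PolySet α n), ∃ (l : Fin e → ℝ) (S : Finset (Fin e)),
      LinearIndepOn ℝ α.row S ∧ (∀ k ∉ S, l k = 0) ∧ l ᵥ* α = u ∧
      (∀ k, 0 < l k → (α *ᵥ x) k = n.2 k) ∧ (∀ k, l k < 0 → (α *ᵥ x) k = n.1 k) := by
  obtain ⟨xs, hxs, hmax⟩ := hb.isCompact_closure.exists_isMaxOn (hP.mono subset_closure)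
    (show Continuous (u ⬝ᵥ ·) by fun_prop).continuousOn
  obtain ⟨c, hc, hcu⟩ := exists_nonneg_sum_smul_activeSign_eq hP hxs hmax
  obtain ⟨S, c', hS, hc', hc'S, hsum⟩ := exists_nonneg_linearIndepOn_sum_smul_eq
    (fun k => activeSign α n xs k • α k) hc
  refine ⟨xs, hxs, fun k => c' k * activeSign α n xs k, S, hS.of_smul,
    fun k hk => by simp [hc'S k hk], ?_, fun k hk => ?_, fun k hk => ?_⟩
  · rw [vecMul_eq_sum, ← hcu, ← hsum]
    simp [mul_smul]
  · exact mulVec_eq_snd_of_activeSign_pos (pos_of_mul_pos_right hk (hc' k))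
  · exact mulVec_eq_fst_of_activeSign_neg (neg_of_mul_neg_right hk (hc' k))

theorem isGLB_Opt_fst (hα : ∀ i, α i ≠ 0) (hP : (PolySet α n).Nonempty)
    (hb : Bornology.IsBounded (PolySet α n)) (i : Fin e) :
    IsGLB ((fun x => (α *ᵥ x) i) '' PolySet α n) ((Opt α n).1 i) := by
  refine ⟨?_, fun t ht => ?_⟩
  · rintro _ ⟨x, hx, rfl⟩
    rw [← polySet_Opt hα n] at hx
    exact (hx i).1.le
  obtain ⟨x, hx, l, S, hS, hlS, hl, hpos, hneg⟩ := exists_basic_dual_certificate hP hb (-α i)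
  have hl' : (-l) ᵥ* α = α i := by rw [neg_vecMul, hl, neg_neg]
  calc t ≤ (α *ᵥ x) i :=
        closure_minimal (fun x hx => ht ⟨x, hx, rfl⟩)
          (isClosed_le continuous_const (continuous_mulVec_apply α i)) hx
    _ = (-l) ⬝ᵥ (α *ᵥ x) := mulVec_apply_eq_dotProduct hl' x
    _ = ∑ k, (-l) k * eLow ((-l) k) n k :=
        (sum_mul_eLow_eq_dotProduct (fun k hk => hneg k (by simpa using hk))
          fun k hk => hpos k (by simpa using hk)).symm
    _ ≤ (Opt α n).1 i := le_Opt_fst (mem_Lambda_of_linearIndepOn hS (by simpa using hlS) hl')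

theorem isLUB_Opt_snd (hα : ∀ i, α i ≠ 0) (hP : (PolySet α n).Nonempty)
    (hb : Bornology.IsBounded (PolySet α n)) (i : Fin e) :
    IsLUB ((fun x => (α *ᵥ x) i) '' PolySet α n) ((Opt α n).2 i) := by
  refine ⟨?_, fun t ht => ?_⟩
  · rintro _ ⟨x, hx, rfl⟩
    rw [← polySet_Opt hα n] at hx
    exact (hx i).2.le
  obtain ⟨x, hx, l, S, hS, hlS, hl, hpos, hneg⟩ := exists_basic_dual_certificate hP hb (α i)
  calc (Opt α n).2 i ≤ ∑ k, l k * eHigh (l k) n k :=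
        Opt_snd_le (mem_Lambda_of_linearIndepOn hS hlS hl)
    _ = l ⬝ᵥ (α *ᵥ x) := sum_mul_eHigh_eq_dotProduct hpos hneg
    _ = (α *ᵥ x) i := (mulVec_apply_eq_dotProduct hl x).symm
    _ ≤ t := closure_minimal (fun x hx => ht ⟨x, hx, rfl⟩)
          (isClosed_le (continuous_mulVec_apply α i) continuous_const) hx

theorem image_affine_subset_polySet_iff (hα : ∀ i, α i ≠ 0) {n m : CM e}
    (hP : (PolySet α n).Nonempty) (hb : Bornology.IsBounded (PolySet α n)) {a : ℝ} (ha : 0 < a)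
    (b : Fin d → ℝ) :
    (fun x => a • x + b) '' PolySet α n ⊆ PolySet α m ↔
      cmSub (fun i => a * (Opt α n).1 i + (α *ᵥ b) i, fun i => a * (Opt α n).2 i + (α *ᵥ b) i)
        m := by
  have hval : ∀ x i, (α *ᵥ (a • x + b)) i = a * (α *ᵥ x) i + (α *ᵥ b) i := fun x i => by
    simp [mulVec_add, mulVec_smul]
  constructor
  · intro h i
    constructor
    · have hlow : (m.1 i - (α *ᵥ b) i) / a ≤ (Opt α n).1 i := by
        refine (isGLB_Opt_fst hα hP hb i).2 ?_
        rintro _ ⟨x, hx, rfl⟩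
        have := (h ⟨x, hx, rfl⟩ i).1
        rw [hval] at this
        rw [div_le_iff₀ ha]
        linarith
      rw [div_le_iff₀ ha] at hlow
      dsimp only
      linarith
    · have hup : (Opt α n).2 i ≤ (m.2 i - (α *ᵥ b) i) / a := by
        refine (isLUB_Opt_snd hα hP hb i).2 ?_
        rintro _ ⟨x, hx, rfl⟩
        have := (h ⟨x, hx, rfl⟩ i).2
        rw [hval] at this
        rw [le_div_iff₀ ha]
        linarith
      rw [le_div_iff₀ ha] at hup
      dsimp only
      linarith
  · rintro h _ ⟨x, hx, rfl⟩ i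
    rw [← polySet_Opt hα n] at hx
    obtain ⟨hlow, hup⟩ := h i
    dsimp only at hlow hup
    rw [hval]
    exact ⟨hlow.trans_lt (add_lt_add_left (mul_lt_mul_of_pos_left (hx i).1 ha) _),
      (add_lt_add_left (mul_lt_mul_of_pos_left (hx i).2 ha) _).trans_le hup⟩

end Duality

theorem statement_6_general {d e : ℕ}
    (α : Matrix (Fin e) (Fin d) ℝ) (hα : Nondeg α)
    (ι : Type)
    (M : Set (Fin d → ℝ)) (hMb : Bornology.IsBounded M)
    (matom : ι → CM e)
    (hsub : ∀ ω, PolySet α (matom ω) ⊆ M)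
    (F : (Fin d → ℝ) → (Fin d → ℝ)) (a : ℝ) (ha : 1 < a)
    (Bv : ι → (Fin d → ℝ))
    (hF : ∀ ω, ∀ x ∈ PolySet α (matom ω), F x = a • x + Bv ω)
    (q : ℕ) (Ak : Fin q → Set ι) (lk : Fin q → ι → Fin q)
    (mk : Fin q → CM e) :
    ((∀ (k : Fin q) (ω : ι),
        (PolySet α (mk k) ∩ PolySet α (matom ω)).Nonempty ↔ ω ∈ Ak k) ∧
     (∀ (k : Fin q) (ω : ι),
        (PolySet α (mk k) ∩ PolySet α (matom ω)).Nonempty →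
        F '' (PolySet α (mk k) ∩ PolySet α (matom ω)) ⊆ PolySet α (mk (lk k ω))))
    ↔
    ((∀ (k : Fin q) (ω : ι),
        (PolySet α (Opt α (interCM (mk k) (matom ω)))).Nonempty ↔ ω ∈ Ak k) ∧
     (∀ (k : Fin q) (ω : ι),
        (PolySet α (Opt α (interCM (mk k) (matom ω)))).Nonempty →
        cmSub (fun i => a * (Opt α (interCM (mk k) (matom ω))).1 i + α.mulVec (Bv ω) i,
               fun i => a * (Opt α (interCM (mk k) (matom ω))).2 i + α.mulVec (Bv ω) i)
              (mk (lk k ω)))) := by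
  simp only [polySet_Opt hα.1, ← polySet_interCM]
  refine and_congr_right fun _ => forall₂_congr fun k ω => imp_congr_right fun hne => ?_
  have hω : PolySet α (interCM (mk k) (matom ω)) ⊆ PolySet α (matom ω) :=
    (polySet_interCM _ _).trans_subset inter_subset_right
  rw [image_congr fun x hx => hF ω x (hω hx)]
  exact image_affine_subset_polySet_iff hα.1 hne (hMb.subset (hω.trans (hsub ω)))
    (zero_lt_one.trans ha) (Bv ω)

/-- analytic formulation of a standard conditioning problem. -/
theorem statement_6 {d e : ℕ} (hd : 1 ≤ d) (hde : d ≤ e)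
    (α : Matrix (Fin e) (Fin d) ℝ) (hα : Nondeg α)
    (ι : Type) [Fintype ι]
    (M : Set (Fin d → ℝ)) (hMb : Bornology.IsBounded M) (hMc : Convex ℝ M)
    (matom : ι → CM e) (hoptatom : ∀ ω, matom ω = Opt α (matom ω))
    (hsub : ∀ ω, PolySet α (matom ω) ⊆ M)
    (hdisj : ∀ ω ω' : ι, ω ≠ ω' → Disjoint (PolySet α (matom ω)) (PolySet α (matom ω')))
    (hcover : MeasureTheory.volume (M \ ⋃ ω, PolySet α (matom ω)) = 0)
    (F : (Fin d → ℝ) → (Fin d → ℝ)) (a : ℝ) (ha : 1 < a)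
    (Bv : ι → (Fin d → ℝ))
    (hF : ∀ ω, ∀ x ∈ PolySet α (matom ω), F x = a • x + Bv ω)
    (hFM : Set.MapsTo F M M)
    (q : ℕ) (Ak : Fin q → Set ι) (lk : Fin q → ι → Fin q)
    (mk : Fin q → CM e) :
    ((∀ (k : Fin q) (ω : ι),
        (PolySet α (mk k) ∩ PolySet α (matom ω)).Nonempty ↔ ω ∈ Ak k) ∧
     (∀ (k : Fin q) (ω : ι),
        (PolySet α (mk k) ∩ PolySet α (matom ω)).Nonempty →
        F '' (PolySet α (mk k) ∩ PolySet α (matom ω)) ⊆ PolySet α (mk (lk k ω))))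
    ↔
    ((∀ (k : Fin q) (ω : ι),
        (PolySet α (Opt α (interCM (mk k) (matom ω)))).Nonempty ↔ ω ∈ Ak k) ∧
     (∀ (k : Fin q) (ω : ι),
        (PolySet α (Opt α (interCM (mk k) (matom ω)))).Nonempty →
        cmSub (fun i => a * (Opt α (interCM (mk k) (matom ω))).1 i + α.mulVec (Bv ω) i,
               fun i => a * (Opt α (interCM (mk k) (matom ω))).2 i + α.mulVec (Bv ω) i)
              (mk (lk k ω)))) :=
  statement_6_general α hα ι M hMb matom hsub F a ha Bv hF q Ak lk mk
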